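/- Let A: S^d → R^m satisfy the restricted isometry property of order r+2 with constant δ, and let w ∈ R^d be a unit vector. Define the projection P_⊥(Z) = Z − ⟨ww^T, Z⟩ ww^T. Then for every symmetric matrix Z of rank at most r, |⟨A(ww^T), A(P_⊥(Z))⟩| ≤ δ ‖Z‖_F. -/

import Mathlib

open scoped BigOperators
open Matrix

noncomputable def frobNorm {d₁ d₂ : ℕ} (A : Matrix (Fin d₁) (Fin d₂) ℝ) : ℝ :=
  Real.sqrt (∑ i, ∑ j, A i j ^ 2)

noncomputable def vecNorm {m : ℕ} (y : Fin m → ℝ) : ℝ :=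
  Real.sqrt (∑ i, y i ^ 2)

noncomputable def specNorm {d₁ d₂ : ℕ} (A : Matrix (Fin d₁) (Fin d₂) ℝ) : ℝ :=
  ‖LinearMap.toContinuousLinearMap (Matrix.toEuclideanLin A)‖

noncomputable def tinner {d : ℕ} (A B : Matrix (Fin d) (Fin d) ℝ) : ℝ :=
  (A * Bᵀ).trace

noncomputable def sigmaMin {d₁ d₂ : ℕ} (A : Matrix (Fin d₁) (Fin d₂) ℝ) : ℝ :=
  sInf {s : ℝ | 0 < s ∧ ∃ i, s ^ 2 = (Matrix.isHermitian_conjTranspose_mul_self A).eigenvalues i}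

noncomputable def projPerp {d : ℕ} (w : Fin d → ℝ) (Z : Matrix (Fin d) (Fin d) ℝ) :
    Matrix (Fin d) (Fin d) ℝ :=
  Z - tinner (Matrix.vecMulVec w w) Z • Matrix.vecMulVec w w

/-!
For `X ⊥ Y` and `s > 0`, polarization gives
`4 s ⟪𝒜 X, 𝒜 Y⟫ = ‖𝒜 (X + s Y)‖² - ‖𝒜 (X - s Y)‖²`, and the restricted isometry property bounds
both terms by `(1 ± δ) (‖X‖² + s² ‖Y‖²)`; the choice `s = ‖X‖ / ‖Y‖` yields
`|⟪𝒜 X, 𝒜 Y⟫| ≤ δ ‖X‖ ‖Y‖`. Apply this to the unit matrix `X = w wᵀ` and `Y = P⊥ Z`: `Y` is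
orthogonal to `X` with `‖Y‖ ≤ ‖Z‖`, and every `X + s Y` is a combination of `w wᵀ` and `Z`, hence
has rank at most `r + 1`.
-/

lemma frobNorm_sq {d₁ d₂ : ℕ} (A : Matrix (Fin d₁) (Fin d₂) ℝ) :
    frobNorm A ^ 2 = ∑ i, ∑ j, A i j ^ 2 :=
  Real.sq_sqrt <| by positivity

lemma frobNorm_nonneg {d₁ d₂ : ℕ} (A : Matrix (Fin d₁) (Fin d₂) ℝ) : 0 ≤ frobNorm A :=
  Real.sqrt_nonneg _

lemma frobNorm_pos {d₁ d₂ : ℕ} {A : Matrix (Fin d₁) (Fin d₂) ℝ} (hA : A ≠ 0) :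
    0 < frobNorm A := by
  refine Real.sqrt_pos.2 <| lt_of_le_of_ne (by positivity) fun h => hA ?_
  ext i j
  have hrow := (Finset.sum_eq_zero_iff_of_nonneg fun i _ => by positivity).1 h.symm i
    (Finset.mem_univ i)
  simpa using (Finset.sum_eq_zero_iff_of_nonneg fun j _ => by positivity).1 hrow j
    (Finset.mem_univ j)

lemma frobNorm_vecMulVec {d₁ d₂ : ℕ} (u : Fin d₁ → ℝ) (v : Fin d₂ → ℝ) :
    frobNorm (vecMulVec u v) = vecNorm u * vecNorm v := by
  rw [frobNorm, vecNorm, vecNorm, ← Real.sqrt_mul (by positivity), Finset.sum_mul_sum]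
  simp only [vecMulVec_apply, mul_pow]

section

variable {d : ℕ}

lemma tinner_eq_sum (A B : Matrix (Fin d) (Fin d) ℝ) :
    tinner A B = ∑ i, ∑ j, A i j * B i j := by
  simp [tinner, Matrix.trace, Matrix.mul_apply]

lemma tinner_comm (A B : Matrix (Fin d) (Fin d) ℝ) : tinner A B = tinner B A := by
  simp only [tinner_eq_sum, mul_comm]

lemma tinner_self (A : Matrix (Fin d) (Fin d) ℝ) : tinner A A = frobNorm A ^ 2 := by
  rw [tinner_eq_sum, frobNorm_sq]
  simp only [sq]

@[simp] lemma tinner_add_right (A B C : Matrix (Fin d) (Fin d) ℝ) :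
    tinner A (B + C) = tinner A B + tinner A C := by
  simp [tinner, Matrix.mul_add]

@[simp] lemma tinner_sub_right (A B C : Matrix (Fin d) (Fin d) ℝ) :
    tinner A (B - C) = tinner A B - tinner A C := by
  simp [tinner, Matrix.mul_sub]

@[simp] lemma tinner_smul_right (A B : Matrix (Fin d) (Fin d) ℝ) (c : ℝ) :
    tinner A (c • B) = c * tinner A B := by
  simp [tinner]

@[simp] lemma tinner_add_left (A B C : Matrix (Fin d) (Fin d) ℝ) :
    tinner (A + B) C = tinner A C + tinner B C := by
  simp [tinner, Matrix.add_mul]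

@[simp] lemma tinner_smul_left (A B : Matrix (Fin d) (Fin d) ℝ) (c : ℝ) :
    tinner (c • A) B = c * tinner A B := by
  simp [tinner]

lemma frobNorm_add_smul_sq {X Y : Matrix (Fin d) (Fin d) ℝ} (h : tinner X Y = 0) (s : ℝ) :
    frobNorm (X + s • Y) ^ 2 = frobNorm X ^ 2 + s ^ 2 * frobNorm Y ^ 2 := by
  simp only [← tinner_self, tinner_add_left, tinner_add_right, tinner_smul_left,
    tinner_smul_right, tinner_comm Y X, h]
  ring

lemma tinner_sub_tinner_smul_eq_zero {X : Matrix (Fin d) (Fin d) ℝ} (hX : frobNorm X = 1)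
    (Z : Matrix (Fin d) (Fin d) ℝ) : tinner X (Z - tinner X Z • X) = 0 := by
  simp [tinner_self, hX]

lemma frobNorm_sub_tinner_smul_le {X : Matrix (Fin d) (Fin d) ℝ} (hX : frobNorm X = 1)
    (Z : Matrix (Fin d) (Fin d) ℝ) : frobNorm (Z - tinner X Z • X) ≤ frobNorm Z := by
  have hpyth := frobNorm_add_smul_sq
    (by rw [tinner_comm]; exact tinner_sub_tinner_smul_eq_zero hX Z) (tinner X Z)
  rw [sub_add_cancel, hX] at hpyth
  exact (sq_le_sq₀ (frobNorm_nonneg _) (frobNorm_nonneg _)).1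
    (by nlinarith [sq_nonneg (tinner X Z)])

end

namespace Matrix

variable {m n K : Type*} [Fintype n] [Field K]

theorem rank_add_le (A B : Matrix m n K) : (A + B).rank ≤ A.rank + B.rank := by
  refine (Submodule.finrank_mono ?_).trans (Submodule.finrank_add_le_finrank_add_finrank _ _)
  rw [mulVecLin_add]
  exact LinearMap.range_add_le _ _

theorem rank_smul_le (c : K) (A : Matrix m n K) : (c • A).rank ≤ A.rank := by
  refine Submodule.finrank_mono ?_
  have : (c • A).mulVecLin = c • A.mulVecLin := by ext; simp
  rw [this]
  exact LinearMap.range_smul_le_range _ _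

end Matrix

def IsRIP {d m : ℕ} (𝒜 : Matrix (Fin d) (Fin d) ℝ →ₗ[ℝ] (Fin m → ℝ)) (k : ℕ) (δ : ℝ) : Prop :=
  ∀ Z : Matrix (Fin d) (Fin d) ℝ, Z.IsSymm → Z.rank ≤ k →
    (1 - δ) * frobNorm Z ^ 2 ≤ ∑ i, 𝒜 Z i ^ 2 ∧ ∑ i, 𝒜 Z i ^ 2 ≤ (1 + δ) * frobNorm Z ^ 2

lemma sum_add_smul_sq_sub_sum_sub_smul_sq {m : ℕ} (u v : Fin m → ℝ) (s : ℝ) :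
    ∑ i, (u i + s * v i) ^ 2 - ∑ i, (u i - s * v i) ^ 2 = 4 * s * ∑ i, u i * v i := by
  rw [← Finset.sum_sub_distrib, Finset.mul_sum]
  exact Finset.sum_congr rfl fun i _ => by ring

theorem IsRIP.abs_sum_mul_le {d m k : ℕ} {𝒜 : Matrix (Fin d) (Fin d) ℝ →ₗ[ℝ] (Fin m → ℝ)} {δ : ℝ}
    (h𝒜 : IsRIP 𝒜 k δ) {X Y : Matrix (Fin d) (Fin d) ℝ} (hX : X.IsSymm) (hY : Y.IsSymm)
    (hXY : tinner X Y = 0) (hrank : ∀ s : ℝ, (X + s • Y).rank ≤ k) :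
    |∑ i, 𝒜 X i * 𝒜 Y i| ≤ δ * (frobNorm X * frobNorm Y) := by
  rcases eq_or_ne X 0 with rfl | hX0
  · simp [frobNorm]
  rcases eq_or_ne Y 0 with rfl | hY0
  · simp [frobNorm]
  have hbounds (s : ℝ) := h𝒜 (X + s • Y) (hX.add (hY.smul s)) (hrank s)
  simp only [frobNorm_add_smul_sq hXY, map_add, map_smul, Pi.add_apply, Pi.smul_apply,
    smul_eq_mul] at hbounds
  set a := frobNorm X
  set b := frobNorm Y
  set s := a / b
  have hs : 0 < s := div_pos (frobNorm_pos hX0) (frobNorm_pos hY0)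
  have hsb : s * b = a := div_mul_cancel₀ _ (frobNorm_pos hY0).ne'
  clear_value s
  have hbalance : a ^ 2 + s ^ 2 * b ^ 2 = 2 * (s * (a * b)) := by
    linear_combination (s * b - a) * hsb
  obtain ⟨hplus_lo, hplus_hi⟩ := hbounds s
  obtain ⟨hminus_lo, hminus_hi⟩ := hbounds (-s)
  simp only [neg_mul, ← sub_eq_add_neg, neg_sq] at hminus_lo hminus_hi
  rw [hbalance] at hplus_lo hplus_hi hminus_lo hminus_hi
  have hpol := sum_add_smul_sq_sub_sum_sub_smul_sq (𝒜 X) (𝒜 Y) s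
  have h4s : |4 * s * ∑ i, 𝒜 X i * 𝒜 Y i| ≤ 4 * s * (δ * (a * b)) := by
    rw [abs_le]
    constructor <;> linarith
  rwa [abs_mul, abs_of_pos (by positivity), mul_le_mul_iff_right₀ (by positivity)] at h4s

lemma isSymm_vecMulVec_self {d : ℕ} (w : Fin d → ℝ) : (vecMulVec w w).IsSymm :=
  transpose_vecMulVec w w

lemma rank_vecMulVec_self_add_smul_projPerp_le {d r : ℕ} (w : Fin d → ℝ)
    {Z : Matrix (Fin d) (Fin d) ℝ} (hr : Z.rank ≤ r) (s : ℝ) :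
    (vecMulVec w w + s • projPerp w Z).rank ≤ r + 1 := by
  have hcomb : vecMulVec w w + s • projPerp w Z =
      (1 - s * tinner (vecMulVec w w) Z) • vecMulVec w w + s • Z := by
    rw [projPerp]
    module
  rw [hcomb, add_comm r]
  exact (rank_add_le _ _).trans <| add_le_add
    ((rank_smul_le _ _).trans (rank_vecMulVec_le w w)) ((rank_smul_le _ _).trans hr)

theorem statement3 {d m r : ℕ} (δ : ℝ) (hδ : 0 ≤ δ)
    (𝒜 : Matrix (Fin d) (Fin d) ℝ →ₗ[ℝ] (Fin m → ℝ))
    (hRIP : ∀ Z : Matrix (Fin d) (Fin d) ℝ, Z.IsSymm → Z.rank ≤ r + 2 →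
      (1 - δ) * frobNorm Z ^ 2 ≤ ∑ i, 𝒜 Z i ^ 2 ∧
        ∑ i, 𝒜 Z i ^ 2 ≤ (1 + δ) * frobNorm Z ^ 2)
    (w : Fin d → ℝ) (hw : ∑ i, w i ^ 2 = 1)
    (Z : Matrix (Fin d) (Fin d) ℝ) (hZ : Z.IsSymm) (hr : Z.rank ≤ r) :
    |∑ i, 𝒜 (Matrix.vecMulVec w w) i * 𝒜 (projPerp w Z) i| ≤ δ * frobNorm Z := by
  have hunit : frobNorm (vecMulVec w w) = 1 := by
    rw [frobNorm_vecMulVec, vecNorm, hw, Real.sqrt_one, one_mul]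
  have hsymm := isSymm_vecMulVec_self w
  calc |∑ i, 𝒜 (vecMulVec w w) i * 𝒜 (projPerp w Z) i|
      ≤ δ * (frobNorm (vecMulVec w w) * frobNorm (projPerp w Z)) :=
        IsRIP.abs_sum_mul_le (k := r + 2) hRIP hsymm (hZ.sub (hsymm.smul _))
          (tinner_sub_tinner_smul_eq_zero hunit Z)
          fun s => (rank_vecMulVec_self_add_smul_projPerp_le w hr s).trans (by omega)
    _ ≤ δ * frobNorm Z := by
        rw [hunit, one_mul]
        exact mul_le_mul_of_nonneg_left (frobNorm_sub_tinner_smul_le hunit Z) hδ
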